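/- arXiv:1707.00122 — 7 statements merged into one kernel-verified Lean document; each statement's English description precedes it below -/
import Mathlib

section
/- The function ψ(u,z) = b·e^{cz}·e^{√(1-2c²u)} / (1 + √(1-2c²u)) satisfies ψ ψ_u + u ψ_u² + (1/2) ψ_z² = 0 on a neighbourhood of (0,0). -/
/-!
Write `s = √(1 - 2c²u)`. Since `ψ` is `e^{cz}` times a function of `s`, and
`d/ds (eˢ / (1 + s)) = s eˢ / (1 + s)²` while `ds/du = -c² / s`, one finds
`ψ_z = c ψ` and `ψ_u = -c² ψ / (1 + s)`. Substituting `2c²u = (1 - s)(1 + s)`, the left-hand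
side becomes `c² ψ² (-2 + (1 - s) + (1 + s)) / (2(1 + s)) = 0`. This holds wherever
`2c²u < 1`, in particular for `|u| < 1 / (2c² + 1)`.
-/

open scoped Complex

namespace PsiPDE

noncomputable def psi (b : ℂ) (c u z : ℝ) : ℂ :=
  b * cexp (c * z) * cexp (√(1 - 2 * c ^ 2 * u) : ℝ) / (1 + (√(1 - 2 * c ^ 2 * u) : ℝ))

theorem hasDerivAt_exp_div_one_add {w : ℂ} (hw : 1 + w ≠ 0) :
    HasDerivAt (fun w => cexp w / (1 + w)) (w * cexp w / (1 + w) ^ 2) w := by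
  refine ((Complex.hasDerivAt_exp w).div ((hasDerivAt_id' w).const_add 1) hw).congr_deriv ?_
  ring

theorem hasDerivAt_sqrt_one_sub_mul {a u : ℝ} (hu : 0 < 1 - a * u) :
    HasDerivAt (fun t => √(1 - a * t)) (-a / (2 * √(1 - a * u))) u := by
  refine ((Real.hasDerivAt_sqrt hu.ne').comp u
    (((hasDerivAt_id' u).const_mul a).const_sub 1)).congr_deriv ?_
  ring

theorem hasDerivAt_psi_fst (b : ℂ) {c u : ℝ} (z : ℝ) (hu : 0 < 1 - 2 * c ^ 2 * u) :
    HasDerivAt (fun t => psi b c t z)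
      (-c ^ 2 * psi b c u z / (1 + (√(1 - 2 * c ^ 2 * u) : ℝ))) u := by
  have hsqrt := (hasDerivAt_sqrt_one_sub_mul (a := 2 * c ^ 2) hu).ofReal_comp
  set s := √(1 - 2 * c ^ 2 * u) with hs_def
  have hs : 0 < s := Real.sqrt_pos.mpr hu
  have hs1 : (1 + s : ℂ) ≠ 0 := by exact_mod_cast (by positivity : 1 + s ≠ 0)
  have hs0 : (s : ℂ) ≠ 0 := by exact_mod_cast hs.ne'
  have := ((hasDerivAt_exp_div_one_add hs1).comp u hsqrt).const_mul (b * cexp (c * z))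
  refine (this.congr_deriv ?_).congr_of_eventuallyEq (.of_forall fun t => ?_)
  · rw [psi, ← hs_def]
    push_cast
    field_simp
  · simp only [psi, Function.comp]
    ring

theorem hasDerivAt_psi_snd (b : ℂ) (c u z : ℝ) :
    HasDerivAt (fun t => psi b c u t) (c * psi b c u z) z := by
  have hexp : HasDerivAt (fun t : ℝ => cexp (c * t)) (cexp (c * z) * c) z := by
    simpa using ((hasDerivAt_id (z : ℂ)).const_mul (c : ℂ)).cexp.comp_ofReal
  refine (hexp.const_mul b |>.mul_const (cexp (√(1 - 2 * c ^ 2 * u) : ℝ))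
    |>.div_const (1 + (√(1 - 2 * c ^ 2 * u) : ℝ))).congr_deriv ?_
  rw [psi]
  ring

theorem pde_identity {P s c u : ℂ} (hs : s ^ 2 = 1 - 2 * c ^ 2 * u) (hs1 : 1 + s ≠ 0) :
    P * (-c ^ 2 * P / (1 + s)) + u * (-c ^ 2 * P / (1 + s)) ^ 2 + 1 / 2 * (c * P) ^ 2 = 0 := by
  field_simp
  linear_combination (P ^ 2 * c ^ 2) * hs

theorem psi_pde (b : ℂ) {c u : ℝ} (z : ℝ) (hu : 2 * c ^ 2 * u < 1) :
    psi b c u z * deriv (fun t => psi b c t z) u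
      + u * (deriv (fun t => psi b c t z) u) ^ 2
      + 1 / 2 * (deriv (fun t => psi b c u t) z) ^ 2 = 0 := by
  have hu' : 0 < 1 - 2 * c ^ 2 * u := by linarith
  rw [(hasDerivAt_psi_fst b z hu').deriv, (hasDerivAt_psi_snd b c u z).deriv]
  refine pde_identity ?_ (by exact_mod_cast (by positivity : 1 + √(1 - 2 * c ^ 2 * u) ≠ 0))
  exact_mod_cast Real.sq_sqrt hu'.le

end PsiPDE

/-- ψ(u,z) = b e^{cz} e^{√(1-2c²u)} / (1 + √(1-2c²u)) satisfies
    ψψ_u + uψ_u² + (1/2)ψ_z² = 0 on a neighbourhood of (0,0). -/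
theorem stmt_2 (b : ℂ) (c : ℝ) (ψ : ℝ → ℝ → ℂ)
    (hψ : ∀ u z : ℝ, ψ u z =
      b * Complex.exp ((c : ℂ) * (z : ℂ))
        * Complex.exp ((Real.sqrt (1 - 2 * c ^ 2 * u) : ℂ))
        / (1 + (Real.sqrt (1 - 2 * c ^ 2 * u) : ℂ))) :
    ∃ ε > (0 : ℝ), ∀ u z : ℝ, |u| < ε → |z| < ε →
      (ψ u z) * deriv (fun t => ψ t z) u
        + (u : ℂ) * (deriv (fun t => ψ t z) u) ^ 2
        + (1 / 2) * (deriv (fun t => ψ u t) z) ^ 2 = 0 := by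
  obtain rfl : ψ = PsiPDE.psi b c := funext₂ hψ
  refine ⟨1 / (2 * c ^ 2 + 1), by positivity, fun u z hu _ => PsiPDE.psi_pde b z ?_⟩
  rw [lt_div_iff₀ (by positivity)] at hu
  nlinarith [le_abs_self u, abs_nonneg u, sq_nonneg c]
end

section
/- Define f : ℕ → ℚ by f(0) = -1 and f(k) = (1/(k(k+1))) · C(2k-2, k-1) · (3/2)^{k-1} for k ≥ 1. Then f(1) = 1/2, and for every k ≥ 1: (k+1) f(k+1) = Σ_{m=0}^{k} [ (m+2)(k-m) f(m+1) f(k-m) + (1/2)(2m-1)(2k-2m-1) f(m) f(k-m) ]. -/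
/-!
With `C` the Catalan numbers, `f (n + 1) = C n / (n + 2) * (3 / 2) ^ n`. The recurrence
`(n + 2) C (n + 1) = 2 (2n + 1) C n` turns the weights of the sum into
`(j + 1) C j / (j + 2) = (2 C j + C (j + 1)) / 6` and `(2j + 1) C j / (j + 2) = C (j + 1) / 2`,
so both halves of the sum become Segner convolutions `∑ C i C (n - i) = C (n + 1)`, and everything
is expressed through `C (n + 1)` and `C (n + 2)`.
-/

open Finset

theorem add_two_mul_catalan_succ (n : ℕ) :
    (n + 2) * catalan (n + 1) = 2 * (2 * n + 1) * catalan n := by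
  refine Nat.eq_of_mul_eq_mul_left n.succ_pos ?_
  calc (n + 1) * ((n + 2) * catalan (n + 1))
      = (n + 1) * (n + 1).centralBinom := by rw [← succ_mul_catalan_eq_centralBinom]
    _ = 2 * (2 * n + 1) * n.centralBinom := Nat.succ_mul_centralBinom_succ n
    _ = (n + 1) * (2 * (2 * n + 1) * catalan n) := by
      rw [← succ_mul_catalan_eq_centralBinom]; ring

theorem sum_range_catalan_mul_catalan (n : ℕ) :
    ∑ m ∈ range (n + 1), catalan m * catalan (n - m) = catalan (n + 1) := by
  rw [catalan_succ, Fin.sum_univ_eq_sum_range (fun m => catalan m * catalan (n - m))]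

theorem sum_range_catalan_mul_catalan_add_one_sub (n : ℕ) :
    ∑ m ∈ range (n + 1), catalan m * catalan (n + 1 - m) + catalan (n + 1) =
      catalan (n + 2) := by
  rw [← sum_range_catalan_mul_catalan (n + 1), sum_range_succ (n := n + 1), Nat.sub_self,
    catalan_zero, mul_one]

theorem sum_range_catalan_succ_mul_catalan (n : ℕ) :
    ∑ i ∈ range n, catalan (i + 1) * catalan (n - i) + 2 * catalan (n + 1) =
      catalan (n + 2) := by
  rw [← sum_range_catalan_mul_catalan (n + 1), sum_range_succ', sum_range_succ]
  simp only [Nat.add_sub_add_right, Nat.sub_self, Nat.sub_zero, catalan_zero]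
  ring

theorem add_one_mul_catalan_div (n : ℕ) :
    ((n : ℚ) + 1) * (catalan n / (n + 2)) = (2 * catalan n + catalan (n + 1)) / 6 := by
  have h : ((n : ℚ) + 2) * catalan (n + 1) = 2 * (2 * n + 1) * catalan n := by
    exact_mod_cast add_two_mul_catalan_succ n
  field_simp
  linear_combination -h

theorem two_mul_add_one_mul_catalan_div (n : ℕ) :
    (2 * (n : ℚ) + 1) * (catalan n / (n + 2)) = catalan (n + 1) / 2 := by
  have h : ((n : ℚ) + 2) * catalan (n + 1) = 2 * (2 * n + 1) * catalan n := by
    exact_mod_cast add_two_mul_catalan_succ n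
  field_simp
  linear_combination -h

theorem one_div_mul_choose_eq_catalan_div (n : ℕ) :
    1 / (((n + 1 : ℕ) : ℚ) * ((n + 1 : ℕ) + 1)) * ((2 * n).choose n : ℚ) =
      catalan n / (n + 2) := by
  rw [← Nat.centralBinom_eq_two_mul_choose, ← succ_mul_catalan_eq_centralBinom]
  push_cast
  field_simp
  ring

theorem sum_range_shifted_products {f : ℕ → ℚ}
    (hf : ∀ n, f (n + 1) = catalan n / (n + 2) * (3 / 2) ^ n) (n : ℕ) :
    ∑ m ∈ range (n + 2), ((m : ℚ) + 2) * ((n : ℚ) + 1 - m) * f (m + 1) * f (n + 1 - m) =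
      (3 / 2) ^ n * (catalan (n + 1) + catalan (n + 2)) / 6 := by
  have hterm : ∀ m ∈ range (n + 1),
      ((m : ℚ) + 2) * ((n : ℚ) + 1 - m) * f (m + 1) * f (n + 1 - m) =
        (3 / 2) ^ n / 6 *
          (2 * (catalan m * catalan (n - m) : ℕ) + (catalan m * catalan (n + 1 - m) : ℕ)) := by
    intro m hm
    obtain ⟨j, rfl⟩ := Nat.exists_eq_add_of_le (Nat.lt_succ_iff.mp (mem_range.mp hm))
    rw [show m + j + 1 - m = j + 1 by omega, show m + j - m = j by omega, hf, hf]
    push_cast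
    calc ((m : ℚ) + 2) * (m + j + 1 - m) * (catalan m / (m + 2) * (3 / 2) ^ m) *
          (catalan j / (j + 2) * (3 / 2) ^ j)
        = catalan m * (3 / 2) ^ (m + j) * ((j + 1) * (catalan j / (j + 2))) := by
          field_simp; ring
      _ = _ := by rw [add_one_mul_catalan_div]; ring
  have hconv := sum_range_catalan_mul_catalan n
  have hshift := sum_range_catalan_mul_catalan_add_one_sub n
  rw [sum_range_succ, sum_congr rfl hterm, ← mul_sum, sum_add_distrib, ← mul_sum,
    ← Nat.cast_sum, ← Nat.cast_sum, hconv, ← hshift]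
  push_cast
  ring

theorem sum_range_odd_weighted_products {f : ℕ → ℚ}
    (hf : ∀ n, f (n + 1) = catalan n / (n + 2) * (3 / 2) ^ n) (h0 : f 0 = -1) (n : ℕ) :
    ∑ m ∈ range (n + 2),
        1 / 2 * (2 * (m : ℚ) - 1) * (2 * ((n : ℚ) + 1) - 2 * m - 1) * f m * f (n + 1 - m) =
      (3 / 2) ^ n * (4 * catalan (n + 1) + catalan (n + 2)) / 12 := by
  have hterm : ∀ i ∈ range n,
      1 / 2 * (2 * ((i + 1 : ℕ) : ℚ) - 1) * (2 * ((n : ℚ) + 1) - 2 * (i + 1 : ℕ) - 1) *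
          f (i + 1) * f (n + 1 - (i + 1)) =
        (3 / 2) ^ n / 12 * (catalan (i + 1) * catalan (n - i) : ℕ) := by
    intro i hi
    obtain ⟨j, rfl⟩ := Nat.exists_eq_add_of_lt (mem_range.mp hi)
    rw [show i + j + 1 + 1 - (i + 1) = j + 1 by omega, show i + j + 1 - i = j + 1 by omega, hf, hf]
    push_cast
    calc 1 / 2 * (2 * ((i : ℚ) + 1) - 1) * (2 * (i + j + 1 + 1) - 2 * (i + 1) - 1) *
          (catalan i / (i + 2) * (3 / 2) ^ i) * (catalan j / (j + 2) * (3 / 2) ^ j)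
        = 1 / 2 * (3 / 2) ^ (i + j) * ((2 * i + 1) * (catalan i / (i + 2))) *
            ((2 * j + 1) * (catalan j / (j + 2))) := by
          rw [pow_add]; ring
      _ = _ := by rw [two_mul_add_one_mul_catalan_div, two_mul_add_one_mul_catalan_div]; ring
  have hends := two_mul_add_one_mul_catalan_div n
  have hsum := sum_range_catalan_succ_mul_catalan n
  rw [sum_range_succ, sum_range_succ', sum_congr rfl hterm, ← mul_sum, ← Nat.cast_sum,
    ← hsum, Nat.sub_zero, Nat.sub_self, h0, hf]
  push_cast
  linear_combination (3 / 2 : ℚ) ^ n * hends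

/-- f(0) = -1, f(k) = (1/(k(k+1))) C(2k-2,k-1) (3/2)^{k-1} satisfies
    f(1) = 1/2 and the quadratic recurrence (k+1)f(k+1) = Σ_{m=0}^k {...}. -/
theorem stmt_5 (f : ℕ → ℚ) (h0 : f 0 = -1)
    (hf : ∀ k : ℕ, 1 ≤ k →
      f k = (1 / ((k : ℚ) * ((k : ℚ) + 1))) * ((2 * k - 2).choose (k - 1) : ℚ)
        * (3 / 2) ^ (k - 1)) :
    f 1 = 1 / 2 ∧
    ∀ k : ℕ, 1 ≤ k →
      ((k : ℚ) + 1) * f (k + 1) =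
        ∑ m ∈ Finset.range (k + 1),
          (((m : ℚ) + 2) * ((k : ℚ) - (m : ℚ)) * f (m + 1) * f (k - m)
            + (1 / 2) * (2 * (m : ℚ) - 1) * (2 * (k : ℚ) - 2 * (m : ℚ) - 1)
              * f m * f (k - m)) := by
  have hcat : ∀ n, f (n + 1) = catalan n / (n + 2) * (3 / 2) ^ n := fun n => by
    rw [hf (n + 1) n.succ_pos, show 2 * (n + 1) - 2 = 2 * n by omega, Nat.add_sub_cancel,
      one_div_mul_choose_eq_catalan_div]
  refine ⟨by norm_num [hcat 0], fun k hk => ?_⟩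
  obtain ⟨n, rfl⟩ := Nat.exists_eq_add_of_le' hk
  push_cast
  rw [sum_add_distrib, sum_range_shifted_products hcat, sum_range_odd_weighted_products hcat h0,
    hcat]
  have hlhs := add_one_mul_catalan_div (n + 1)
  push_cast at hlhs ⊢
  linear_combination (3 / 2 : ℚ) ^ (n + 1) * hlhs
end

section
/- Define f : ℕ → ℚ by f(0) = -1 and f(k) = (-1)^k (2k-2)! / (2^k k! (k-1)!) for k ≥ 1. Then for every k ≥ 1: (k+1) f(k+1) = -Σ_{m=0}^{k} [ m(k-m) f(m+1) f(k-m) + (1/2)(2m-1)(2k-2m-1) f(m) f(k-m) ]. -/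
/-!
Writing `Y = ∑ f k Xᵏ`, the closed form says `Y + 1 = t C(t)` with `t = -X/2` and `C` the
Catalan series, so `C = 1 + t C²` gives `2 (Y² + Y) = X`. Differentiating, `(4Y + 2) Y' = 1`,
and together these give `2XY' - Y = 2YY'`. The recurrence is the `Xᵏ`-coefficient of a quadratic
relation between `Y`, `Y'` and `Z = (Y + 1) / X` that follows from these equations by ring
arithmetic.
-/

open PowerSeries Nat

theorem Nat.factorial_two_mul_eq_catalan_mul (n : ℕ) :
    (2 * n)! = catalan n * n ! * (n + 1)! := by
  rw [← Nat.choose_mul_factorial_mul_factorial (by omega : n ≤ 2 * n), two_mul,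
    Nat.add_sub_cancel, ← two_mul, ← Nat.centralBinom_eq_two_mul_choose,
    ← succ_mul_catalan_eq_centralBinom, Nat.factorial_succ]
  ring

namespace PowerSeries

theorem coeff_X_mul_derivative {R : Type*} [CommSemiring R] (g : R⟦X⟧) (n : ℕ) :
    coeff n (X * d⁄dX R g) = n * coeff n g := by
  cases n with
  | zero => simp
  | succ n => rw [coeff_succ_X_mul, coeff_derivative]; push_cast; ring

variable {R : Type*} [CommRing R]

theorem sq_rescale_X_mul_catalanSeries (a : R) :
    rescale a (X * map (Nat.castRingHom R) catalanSeries) ^ 2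
      = rescale a (X * map (Nat.castRingHom R) catalanSeries) - C a * X := by
  have h := congrArg (map (Nat.castRingHom R)) catalanSeries_sq_mul_X_add_one
  simp only [map_add, map_mul, map_pow, map_X, map_one] at h
  rw [← map_pow, ← rescale_X, ← map_sub]
  congr 1
  linear_combination X * h

theorem derivative_relation_of_two_mul_sq_add_self_eq_X {Y Z : R⟦X⟧}
    (hY : 2 * (Y ^ 2 + Y) = X) (hZ : X * Z = Y + 1) :
    2 * (d⁄dX R Y + (d⁄dX R Y - Z) * (X * d⁄dX R Y)) + (2 * (X * d⁄dX R Y) - Y) ^ 2 = 0 := by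
  have hD : (4 * Y + 2) * d⁄dX R Y = 1 := by
    have h := congrArg (d⁄dX R) hY
    rw [← Nat.cast_ofNat, Derivation.leibniz, Derivation.map_natCast, map_add,
      Derivation.leibniz_pow, derivative_X] at h
    simp only [smul_eq_mul, nsmul_eq_mul] at h
    linear_combination h
  set D := d⁄dX R Y
  have hXD : 2 * (X * D) - Y = 2 * Y * D := by linear_combination (-2 * D) * hY + Y * hD
  rw [hXD]
  linear_combination (-2 * D) * hZ + D * hXD + Y * D * hD

end PowerSeries

theorem two_mul_sq_add_self_mk_eq_X {f : ℕ → ℚ} (h0 : f 0 = -1)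
    (hcat : ∀ n, f (n + 1) = (-1 / 2) ^ (n + 1) * catalan n) :
    2 * (mk f ^ 2 + mk f) = X := by
  have hY : mk f = rescale (-1 / 2 : ℚ) (X * map (Nat.castRingHom ℚ) catalanSeries) - 1 := by
    ext (_ | n) <;> simp only [map_sub, coeff_rescale, coeff_mk, coeff_zero_X_mul, coeff_succ_X_mul,
      coeff_map, catalanSeries_coeff, coeff_one, h0, hcat] <;> norm_num
  have h2 : (2 : ℚ⟦X⟧) * C (-1 / 2) = -1 := by
    rw [← map_ofNat C 2, ← map_mul]; norm_num
  rw [hY]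
  linear_combination 2 * sq_rescale_X_mul_catalanSeries (-1 / 2 : ℚ) - X * h2

theorem succ_mul_coeff_succ_of_two_mul_sq_add_self_mk_eq_X {f : ℕ → ℚ} (h0 : f 0 = -1)
    (hY : 2 * (mk f ^ 2 + mk f) = X) (k : ℕ) :
    ((k : ℚ) + 1) * f (k + 1) =
      -∑ m ∈ Finset.range (k + 1),
        ((m : ℚ) * ((k : ℚ) - (m : ℚ)) * f (m + 1) * f (k - m)
          + (1 / 2) * (2 * (m : ℚ) - 1) * (2 * (k : ℚ) - 2 * (m : ℚ) - 1)
            * f m * f (k - m)) := by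
  have hZ : X * mk (fun n => f (n + 1)) = mk f + 1 := by
    ext (_ | n) <;> simp [h0, coeff_succ_X_mul]
  have hD : d⁄dX ℚ (mk f) = mk fun n => (n + 1) * f (n + 1) := by
    ext n; rw [coeff_derivative, coeff_mk, coeff_mk, mul_comm]
  have hXD : X * d⁄dX ℚ (mk f) = mk fun n => n * f n := by
    ext n; rw [coeff_X_mul_derivative, coeff_mk, coeff_mk]
  have key := congrArg (coeff k) (derivative_relation_of_two_mul_sq_add_self_eq_X hY hZ)
  rw [hXD, hD, map_add, ← map_ofNat C 2, coeff_C_mul, map_add, coeff_mul, pow_two,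
    coeff_mul] at key
  simp only [map_sub, coeff_C_mul, coeff_mk, Finset.Nat.sum_antidiagonal_eq_sum_range_succ_mk,
    map_zero] at key
  have hterm : ∀ m ∈ Finset.range (k + 1),
      (m : ℚ) * ((k : ℚ) - (m : ℚ)) * f (m + 1) * f (k - m)
          + (1 / 2) * (2 * (m : ℚ) - 1) * (2 * (k : ℚ) - 2 * (m : ℚ) - 1) * f m * f (k - m)
        = ((m + 1) * f (m + 1) - f (m + 1)) * ((k - m : ℕ) * f (k - m))
          + (2 * (m * f m) - f m) * (2 * ((k - m : ℕ) * f (k - m)) - f (k - m)) / 2 := by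
    intro m hm
    rw [Nat.cast_sub (Finset.mem_range_succ_iff.mp hm)]
    ring
  rw [Finset.sum_congr rfl hterm, Finset.sum_add_distrib, ← Finset.sum_div]
  linear_combination key / 2

/-- f(0) = -1, f(k) = (-1)^k (2k-2)!/(2^k k! (k-1)!) satisfies
    (k+1)f(k+1) = -Σ_{m=0}^k { m(k-m) f(m+1)f(k-m) + (1/2)(2m-1)(2k-2m-1) f(m)f(k-m) }. -/
theorem stmt_6 (f : ℕ → ℚ) (h0 : f 0 = -1)
    (hf : ∀ k : ℕ, 1 ≤ k →
      f k = (-1) ^ k * ((2 * k - 2).factorial : ℚ)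
        / (2 ^ k * (k.factorial : ℚ) * ((k - 1).factorial : ℚ))) :
    ∀ k : ℕ, 1 ≤ k →
      ((k : ℚ) + 1) * f (k + 1) =
        -∑ m ∈ Finset.range (k + 1),
          ((m : ℚ) * ((k : ℚ) - (m : ℚ)) * f (m + 1) * f (k - m)
            + (1 / 2) * (2 * (m : ℚ) - 1) * (2 * (k : ℚ) - 2 * (m : ℚ) - 1)
              * f m * f (k - m)) := by
  have hcat : ∀ n, f (n + 1) = (-1 / 2) ^ (n + 1) * catalan n := by
    intro n
    rw [hf (n + 1) n.succ_pos, show 2 * (n + 1) - 2 = 2 * n by omega, Nat.add_sub_cancel,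
      Nat.factorial_two_mul_eq_catalan_mul]
    push_cast
    field_simp
    rw [mul_assoc, ← mul_pow]
    norm_num [mul_comm]
  intro k _
  exact succ_mul_coeff_succ_of_two_mul_sq_add_self_mk_eq_X h0
    (two_mul_sq_add_self_mk_eq_X h0 hcat) k
end

section
/- For every integer k ≥ 2: Σ_{j=1}^{k-1} (2j-1)!(2k-2j-1)! / ((j-1)!² (k-j-1)!²) = 2^{2k-5} k(k-1). -/
/-!
With `j = i + 1` and `i + r = k - 2`, the summand is `(2i+1) C(2i,i) · (2r+1) C(2r,r)`, a product
of two coefficients of `(1 - 4x)^(-3/2)`. The sum is therefore the coefficient of `x^(k-2)` in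
`(1 - 4x)^(-3)`, which is `4^(k-2) C(k,2) = 2^(2k-5) k (k-1)`. The power series are handled
through their coefficient recurrences, which add their exponents under convolution.
-/

open Finset

variable {K : Type*}

/-- The coefficient sequences of `a 0 * (1 - c X) ^ (-α)`: the recurrence is the differential
equation `(1 - c X) f' = c α f` read off coefficientwise. -/
def IsHypergeometric [CommSemiring K] (c α : K) (a : ℕ → K) : Prop :=
  ∀ n : ℕ, (n + 1) * a (n + 1) = c * (n + α) * a n

namespace IsHypergeometric

theorem convolution [CommSemiring K] {c α β : K} {a b : ℕ → K}
    (ha : IsHypergeometric c α a) (hb : IsHypergeometric c β b) :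
    IsHypergeometric c (α + β) fun n ↦ ∑ p ∈ antidiagonal n, a p.1 * b p.2 := by
  intro n
  have hleft : ∑ p ∈ antidiagonal (n + 1), (p.1 : K) * a p.1 * b p.2 =
      ∑ p ∈ antidiagonal n, c * (p.1 + α) * a p.1 * b p.2 := by
    rw [Nat.sum_antidiagonal_succ, Nat.cast_zero, zero_mul, zero_mul, zero_add]
    exact sum_congr rfl fun p _ ↦ by rw [Nat.cast_succ, ha]
  have hright : ∑ p ∈ antidiagonal (n + 1), a p.1 * ((p.2 : K) * b p.2) =
      ∑ p ∈ antidiagonal n, a p.1 * (c * (p.2 + β) * b p.2) := by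
    rw [Nat.sum_antidiagonal_succ', Nat.cast_zero, zero_mul, mul_zero, zero_add]
    exact sum_congr rfl fun p _ ↦ by rw [Nat.cast_succ, hb]
  calc ((n : K) + 1) * ∑ p ∈ antidiagonal (n + 1), a p.1 * b p.2
      = ∑ p ∈ antidiagonal (n + 1), ((p.1 : K) * a p.1 * b p.2 + a p.1 * (p.2 * b p.2)) := by
        rw [mul_sum]
        refine sum_congr rfl fun p hp ↦ ?_
        rw [HasAntidiagonal.mem_antidiagonal] at hp
        rw [← Nat.cast_one, ← Nat.cast_add, ← hp, Nat.cast_add]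
        ring
    _ = ∑ p ∈ antidiagonal n, c * ((p.1 + p.2 : ℕ) + (α + β)) * (a p.1 * b p.2) := by
        rw [sum_add_distrib, hleft, hright, ← sum_add_distrib]
        refine sum_congr rfl fun p _ ↦ ?_
        push_cast
        ring
    _ = c * (n + (α + β)) * ∑ p ∈ antidiagonal n, a p.1 * b p.2 := by
        rw [mul_sum]
        refine sum_congr rfl fun p hp ↦ ?_
        rw [HasAntidiagonal.mem_antidiagonal.mp hp]

theorem eq_of_apply_zero [Field K] [CharZero K] {c α : K} {a b : ℕ → K}
    (ha : IsHypergeometric c α a) (hb : IsHypergeometric c α b) (h₀ : a 0 = b 0) : a = b := by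
  funext n
  induction n with
  | zero => exact h₀
  | succ n ih =>
    have hn : (n : K) + 1 ≠ 0 := by exact_mod_cast n.succ_ne_zero
    exact mul_left_cancel₀ hn (by rw [ha, hb, ih])

end IsHypergeometric

section

variable [Field K] [CharZero K]

theorem isHypergeometric_centralBinom :
    IsHypergeometric (4 : K) (1 / 2) fun n ↦ (n.centralBinom : K) := by
  intro n
  have h : ((n + 1 : ℕ) : K) * (n + 1).centralBinom = 2 * (2 * n + 1) * n.centralBinom := by
    exact_mod_cast n.succ_mul_centralBinom_succ
  push_cast at h
  rw [h]
  ring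

theorem isHypergeometric_odd_mul_centralBinom :
    IsHypergeometric (4 : K) (3 / 2) fun n ↦ (2 * n + 1) * (n.centralBinom : K) := by
  intro n
  have h := isHypergeometric_centralBinom (K := K) n
  push_cast
  linear_combination (2 * (n : K) + 3) * h

theorem isHypergeometric_four_pow_mul_choose_two :
    IsHypergeometric (4 : K) 3 fun n ↦ 4 ^ n * ((n + 2).choose 2 : K) := by
  intro n
  simp only [Nat.cast_choose_two]
  push_cast
  ring

theorem sum_antidiagonal_odd_mul_centralBinom (m : ℕ) :
    ∑ p ∈ antidiagonal m,
        (2 * p.1 + 1) * (p.1.centralBinom : K) * ((2 * p.2 + 1) * (p.2.centralBinom : K)) =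
      4 ^ m * ((m + 2).choose 2 : K) := by
  have hconv := isHypergeometric_odd_mul_centralBinom.convolution
    (isHypergeometric_odd_mul_centralBinom (K := K))
  rw [show (3 / 2 + 3 / 2 : K) = 3 by norm_num] at hconv
  exact congrFun (hconv.eq_of_apply_zero isHypergeometric_four_pow_mul_choose_two (by simp)) m

open Nat in
theorem odd_factorial_div_factorial_sq (n : ℕ) :
    ((2 * n + 1)! : K) / (n ! : K) ^ 2 = (2 * n + 1) * n.centralBinom := by
  have hn : (n ! : K) ≠ 0 := by exact_mod_cast n.factorial_ne_zero
  rw [Nat.centralBinom_eq_two_mul_choose, Nat.cast_choose K (by omega : n ≤ 2 * n),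
    show 2 * n - n = n by omega, Nat.factorial_succ]
  push_cast
  field_simp

end

/-- Σ_{j=1}^{k-1} (2j-1)!(2k-2j-1)!/((j-1)!²(k-j-1)!²) = 2^{2k-5} k(k-1)
    for k ≥ 2. -/
theorem stmt_10 (k : ℕ) (hk : 2 ≤ k) :
    ∑ j ∈ Finset.Icc 1 (k - 1),
      (((2 * j - 1).factorial : ℚ) * ((2 * k - 2 * j - 1).factorial : ℚ))
        / (((j - 1).factorial : ℚ) ^ 2 * (((k - j - 1).factorial : ℚ)) ^ 2)
      = (2 : ℚ) ^ (2 * (k : ℤ) - 5) * (k : ℚ) * ((k : ℚ) - 1) := by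
  obtain ⟨m, rfl⟩ : ∃ m, k = m + 2 := ⟨k - 2, by omega⟩
  have hterm : ∀ i ∈ range (m + 1),
      (((2 * (1 + i) - 1).factorial : ℚ) * ((2 * (m + 2) - 2 * (1 + i) - 1).factorial : ℚ))
        / (((1 + i - 1).factorial : ℚ) ^ 2 * ((m + 2 - (1 + i) - 1).factorial : ℚ) ^ 2) =
      (2 * i + 1) * (i.centralBinom : ℚ) *
        ((2 * (m - i : ℕ) + 1) * ((m - i).centralBinom : ℚ)) := by
    intro i hi
    have hi : i ≤ m := Nat.lt_succ_iff.mp (mem_range.mp hi)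
    rw [show 2 * (1 + i) - 1 = 2 * i + 1 by omega, show 1 + i - 1 = i by omega,
      show 2 * (m + 2) - 2 * (1 + i) - 1 = 2 * (m - i) + 1 by omega,
      show m + 2 - (1 + i) - 1 = m - i by omega, mul_div_mul_comm,
      odd_factorial_div_factorial_sq, odd_factorial_div_factorial_sq]
  have hpow : (2 : ℚ) ^ (2 * ((m + 2 : ℕ) : ℤ) - 5) = 4 ^ m / 2 := by
    rw [show 2 * ((m + 2 : ℕ) : ℤ) - 5 = 2 * (m : ℤ) - 1 by push_cast; ring,
      zpow_sub₀ two_ne_zero, zpow_mul, zpow_natCast]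
    norm_num
  rw [show m + 2 - 1 = m + 1 by omega, ← Finset.Ico_add_one_right_eq_Icc,
    Finset.sum_Ico_eq_sum_range, show m + 1 + 1 - 1 = m + 1 by omega, sum_congr rfl hterm,
    ← Nat.sum_antidiagonal_eq_sum_range_succ_mk
      (fun p ↦ (2 * p.1 + 1) * (p.1.centralBinom : ℚ) *
        ((2 * p.2 + 1) * (p.2.centralBinom : ℚ))),
    sum_antidiagonal_odd_mul_centralBinom, Nat.cast_choose_two, hpow]
  push_cast
  ring
end

section
/- For every integer m ≥ 0: Σ_{j=0}^{m} (2j+1)(2m-2j+1) C(2j, j) C(2m-2j, m-j) = 2^{2m-1} (m+1)(m+2). -/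
/-!
With `a k = (2k+1) C(2k,k)` the sum is the convolution square `T m = ∑_{i+j=m} a i a j`.
The recurrence `(k+1) a (k+1) = (4k+6) a k` (i.e. `∑ a k X^k = (1-4X)^{-3/2}`) transfers to
`(m+1) T (m+1) = (4m+12) T m`: shift the index in `∑_{i+j=m+1} i a i a j` and use the symmetry
`i ↔ j` to replace the weight `i` by `m/2`. Induction then gives `T m = 4^m (m+1)(m+2)/2`.
-/

open Finset

section SelfConvolution

variable {R : Type*} [CommSemiring R]

def selfConv (a : ℕ → R) (n : ℕ) : R := ∑ p ∈ antidiagonal n, a p.1 * a p.2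

theorem two_mul_sum_fst_mul_selfConv (a : ℕ → R) (n : ℕ) :
    2 * ∑ p ∈ antidiagonal n, (p.1 : R) * (a p.1 * a p.2) = n * selfConv a n := by
  have hswap : ∑ p ∈ antidiagonal n, (p.1 : R) * (a p.1 * a p.2)
      = ∑ p ∈ antidiagonal n, (p.2 : R) * (a p.1 * a p.2) := by
    rw [← Nat.sum_antidiagonal_swap]
    exact sum_congr rfl fun p _ => by rw [Prod.fst_swap, Prod.snd_swap, mul_comm (a p.2)]
  rw [two_mul, selfConv, mul_sum]
  nth_rewrite 2 [hswap]
  rw [← sum_add_distrib]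
  refine sum_congr rfl fun p hp => ?_
  rw [← add_mul, ← Nat.cast_add, mem_antidiagonal.mp hp]

theorem succ_mul_selfConv_succ (a : ℕ → R) (c d : R)
    (ha : ∀ k : ℕ, ((k : R) + 1) * a (k + 1) = (c * k + d) * a k) (n : ℕ) :
    ((n : R) + 1) * selfConv a (n + 1) = (c * n + 2 * d) * selfConv a n := by
  have hshift : ∑ p ∈ antidiagonal (n + 1), (p.1 : R) * (a p.1 * a p.2)
      = c * ∑ p ∈ antidiagonal n, (p.1 : R) * (a p.1 * a p.2) + d * selfConv a n := by
    rw [Nat.sum_antidiagonal_succ, selfConv, mul_sum, mul_sum, ← sum_add_distrib]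
    simp only [Nat.cast_zero, zero_mul, zero_add, Nat.cast_succ]
    refine sum_congr rfl fun p _ => ?_
    rw [← mul_assoc, ha]
    ring
  calc ((n : R) + 1) * selfConv a (n + 1)
      = 2 * ∑ p ∈ antidiagonal (n + 1), (p.1 : R) * (a p.1 * a p.2) := by
        rw [two_mul_sum_fst_mul_selfConv, Nat.cast_succ]
    _ = c * (2 * ∑ p ∈ antidiagonal n, (p.1 : R) * (a p.1 * a p.2)) + 2 * d * selfConv a n := by
        rw [hshift]; ring
    _ = (c * n + 2 * d) * selfConv a n := by
        rw [two_mul_sum_fst_mul_selfConv]; ring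

end SelfConvolution

def oddCentralBinom (k : ℕ) : ℚ := (2 * k + 1) * k.centralBinom

theorem succ_mul_oddCentralBinom_succ (k : ℕ) :
    ((k : ℚ) + 1) * oddCentralBinom (k + 1) = (4 * k + 6) * oddCentralBinom k := by
  have h : ((k : ℚ) + 1) * (k + 1).centralBinom = 2 * (2 * k + 1) * k.centralBinom := by
    exact_mod_cast Nat.succ_mul_centralBinom_succ k
  rw [oddCentralBinom, oddCentralBinom]
  push_cast
  linear_combination (2 * (k : ℚ) + 3) * h

theorem selfConv_oddCentralBinom (m : ℕ) :
    selfConv oddCentralBinom m = 4 ^ m * ((m : ℚ) + 1) * ((m : ℚ) + 2) / 2 := by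
  induction m with
  | zero => simp [selfConv, oddCentralBinom]
  | succ m ih =>
    have hrec := succ_mul_selfConv_succ oddCentralBinom 4 6 succ_mul_oddCentralBinom_succ m
    rw [ih] at hrec
    have hm : (m : ℚ) + 1 ≠ 0 := by positivity
    apply mul_left_cancel₀ hm
    rw [hrec]
    push_cast
    ring

/-- Σ_{j=0}^m (2j+1)(2m-2j+1) C(2j,j) C(2m-2j,m-j) = 2^{2m-1}(m+1)(m+2). -/
theorem stmt_11 (m : ℕ) :
    ∑ j ∈ Finset.range (m + 1),
      (2 * (j : ℚ) + 1) * (2 * (m : ℚ) - 2 * (j : ℚ) + 1)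
        * ((2 * j).choose j : ℚ) * ((2 * m - 2 * j).choose (m - j) : ℚ)
      = (2 : ℚ) ^ (2 * (m : ℤ) - 1) * ((m : ℚ) + 1) * ((m : ℚ) + 2) := by
  have hterm : ∀ j ∈ range (m + 1),
      (2 * (j : ℚ) + 1) * (2 * (m : ℚ) - 2 * (j : ℚ) + 1)
        * ((2 * j).choose j : ℚ) * ((2 * m - 2 * j).choose (m - j) : ℚ)
      = oddCentralBinom j * oddCentralBinom (m - j) := by
    intro j hj
    have hjm : j ≤ m := Nat.lt_succ_iff.mp (mem_range.mp hj)
    rw [oddCentralBinom, oddCentralBinom, Nat.centralBinom, Nat.centralBinom, Nat.mul_sub,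
      Nat.cast_sub hjm]
    ring
  have hpow : (2 : ℚ) ^ (2 * (m : ℤ) - 1) = 4 ^ m / 2 := by
    rw [zpow_sub₀ two_ne_zero, zpow_mul, zpow_natCast]
    norm_num
  have hconv := selfConv_oddCentralBinom m
  rw [selfConv, Nat.sum_antidiagonal_eq_sum_range_succ
    (fun i j => oddCentralBinom i * oddCentralBinom j)] at hconv
  rw [sum_congr rfl hterm, hconv, hpow]
  ring
end

section
/- For every integer k ≥ 2: Σ_{m=1}^{k-1} [ C(2m, m) C(2k-2m-2, k-m-1) / ((m+1)(k-m+1)) ] = (1/(12(k+2))) C(2k+2, k+1) + (1/(2(k+2))) C(2k, k) - (1/(k+1)) C(2k-2, k-1). -/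
/-!
Since `C(2m, m) / (m + 1)` is the Catalan number `Cₘ` and, by the recurrence
`(j + 2) C_{j+1} = 2 (2j + 1) Cⱼ`, also `C(2j, j) / (j + 2) = Cⱼ / 3 + C_{j+1} / 6`, the sum splits
into two truncated Catalan convolutions, which Segner's recurrence evaluates. Both sides then
become rational multiples of `C_{k-1}`.
-/

open Finset

theorem choose_two_mul_eq_succ_mul_catalan (n : ℕ) :
    ((2 * n).choose n : ℚ) = (n + 1) * catalan n := by
  rw [← Nat.centralBinom_eq_two_mul_choose, ← succ_mul_catalan_eq_centralBinom]
  push_cast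
  ring

theorem catalan_succ_eq_div (n : ℕ) :
    (catalan (n + 1) : ℚ) = 2 * (2 * n + 1) / (n + 2) * catalan n := by
  have h := Nat.succ_mul_centralBinom_succ n
  rw [← succ_mul_catalan_eq_centralBinom, ← succ_mul_catalan_eq_centralBinom] at h
  have hq : ((n : ℚ) + 1) * ((n + 1 + 1) * catalan (n + 1))
      = 2 * (2 * n + 1) * ((n + 1) * catalan n) := by
    exact_mod_cast h
  rw [div_mul_eq_mul_div, eq_div_iff (by positivity)]
  apply mul_left_cancel₀ (by positivity : (n : ℚ) + 1 ≠ 0)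
  linear_combination hq

theorem choose_two_mul_div_eq (n : ℕ) :
    ((2 * n).choose n : ℚ) / (n + 2) = catalan n / 3 + catalan (n + 1) / 6 := by
  rw [choose_two_mul_eq_succ_mul_catalan, catalan_succ_eq_div]
  field_simp
  ring

theorem choose_mul_choose_div_eq (m j : ℕ) :
    ((2 * m).choose m * (2 * j).choose j : ℚ) / ((m + 1) * (j + 2))
      = catalan m * (catalan j / 3 + catalan (j + 1) / 6) := by
  rw [mul_div_mul_comm, choose_two_mul_div_eq, choose_two_mul_eq_succ_mul_catalan,
    mul_div_cancel_left₀ _ (by positivity)]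

theorem sum_Icc_catalan_mul_catalan (n : ℕ) :
    ∑ m ∈ Icc 1 n, (catalan m : ℚ) * catalan (n - m) = catalan (n + 1) - catalan n := by
  have h : (catalan (n + 1) : ℚ) = ∑ m ∈ range (n + 1), (catalan m : ℚ) * catalan (n - m) := by
    rw [catalan_succ', Nat.sum_antidiagonal_eq_sum_range_succ (fun i j => catalan i * catalan j)]
    push_cast
    rfl
  rw [h, range_eq_Ico, sum_eq_sum_Ico_succ_bot (by omega : 0 < n + 1), zero_add,
    Ico_add_one_right_eq_Icc]
  simp

theorem sum_Icc_catalan_mul_catalan_succ (n : ℕ) :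
    ∑ m ∈ Icc 1 n, (catalan m : ℚ) * catalan (n + 1 - m)
      = catalan (n + 2) - 2 * catalan (n + 1) := by
  have h := sum_Icc_catalan_mul_catalan (n + 1)
  rw [sum_Icc_succ_top (by omega), Nat.sub_self, catalan_zero] at h
  push_cast at h
  linear_combination h

/-- Σ_{m=1}^{k-1} C(2m,m)C(2k-2m-2,k-m-1)/((m+1)(k-m+1))
    = (1/(12(k+2))) C(2k+2,k+1) + (1/(2(k+2))) C(2k,k) - (1/(k+1)) C(2k-2,k-1). -/
theorem stmt_13 (k : ℕ) (hk : 2 ≤ k) :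
    ∑ m ∈ Finset.Icc 1 (k - 1),
      (((2 * m).choose m : ℚ) * ((2 * k - 2 * m - 2).choose (k - m - 1) : ℚ))
        / (((m : ℚ) + 1) * ((k : ℚ) - (m : ℚ) + 1))
    = (1 / (12 * ((k : ℚ) + 2))) * ((2 * k + 2).choose (k + 1) : ℚ)
      + (1 / (2 * ((k : ℚ) + 2))) * ((2 * k).choose k : ℚ)
      - (1 / ((k : ℚ) + 1)) * ((2 * k - 2).choose (k - 1) : ℚ) := by
  obtain ⟨n, rfl⟩ : ∃ n, k = n + 1 := ⟨k - 1, by omega⟩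
  have hsum : ∑ m ∈ Icc 1 n,
      (((2 * m).choose m : ℚ) * ((2 * (n + 1) - 2 * m - 2).choose (n + 1 - m - 1) : ℚ))
        / (((m : ℚ) + 1) * (((n + 1 : ℕ) : ℚ) - m + 1))
      = ∑ m ∈ Icc 1 n, ((catalan m * catalan (n - m) : ℚ) / 3
          + (catalan m * catalan (n + 1 - m) : ℚ) / 6) := by
    refine sum_congr rfl fun m hm => ?_
    obtain ⟨j, rfl⟩ : ∃ j, n = m + j := ⟨n - m, by grind⟩
    rw [show 2 * (m + j + 1) - 2 * m - 2 = 2 * j by omega, show m + j + 1 - m - 1 = j by omega,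
      show m + j + 1 - m = j + 1 by omega, show m + j - m = j by omega,
      show ((m + j + 1 : ℕ) : ℚ) - m + 1 = j + 2 by push_cast; ring, choose_mul_choose_div_eq]
    ring
  rw [Nat.add_sub_cancel, hsum, sum_add_distrib, ← sum_div, ← sum_div,
    sum_Icc_catalan_mul_catalan, sum_Icc_catalan_mul_catalan_succ,
    show 2 * (n + 1) + 2 = 2 * (n + 2) by ring, show 2 * (n + 1) - 2 = 2 * n by omega,
    show n + 1 + 1 = n + 2 from rfl, choose_two_mul_eq_succ_mul_catalan,
    choose_two_mul_eq_succ_mul_catalan, choose_two_mul_eq_succ_mul_catalan,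
    show n + 2 = n + 1 + 1 from rfl, catalan_succ_eq_div (n + 1), catalan_succ_eq_div n]
  push_cast
  field_simp
  ring
end

section
/- For every integer k ≥ 2: Σ_{m=1}^{k-1} [ C(2m, m) C(2k-2m-2, k-m-1) / ((m+1)(k-m)(k-m+1)) ] = (1/6) [ -((k-1)/((k+2)(2k+1))) C(2k+2, k+1) + (6(k-1)/((k+1)(2k-1))) C(2k, k) ]. -/
/-!
Write `t(m, l) = C(2m,m) C(2l,l) / ((m+1)(l+1)(l+2))`, so that the sum is `∑ t(m, k-1-m)`
over `1 ≤ m ≤ k-1`. Along the antidiagonal `m + l = k - 1` the ratio of neighbouring terms is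
rational,
`t(m+1, l) / t(m, l+1) = (2m+1)(l+3) / ((2l+1)(m+2))`, and Gosper's algorithm produces a rational
certificate `R` with `t(m, l+1) = R(m+1, l) t(m+1, l) - R(m, l+1) t(m, l+1)`. The sum therefore
telescopes to three boundary terms, which the recurrence `(n+1) C(2n+2,n+1) = 2(2n+1) C(2n,n)`
reduces to the closed form.
-/

open Finset Nat

lemma cast_centralBinom_succ (n : ℕ) :
    (centralBinom (n + 1) : ℚ) = 2 * (2 * n + 1) / (n + 1) * centralBinom n := by
  have h : ((n + 1 : ℕ) : ℚ) * centralBinom (n + 1) = 2 * (2 * n + 1) * centralBinom n := by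
    exact_mod_cast succ_mul_centralBinom_succ n
  push_cast at h
  field_simp
  linarith

/-- The summand at `m`, with `l = k - 1 - m`. -/
def convTerm (m l : ℕ) : ℚ :=
  centralBinom m * centralBinom l / ((m + 1) * (l + 1) * (l + 2))

/-- `s = m + l + 1` is the `k` of the statement. -/
def gosperCert (m l : ℕ) : ℚ :=
  let s : ℚ := m + l + 1
  let x : ℚ := m
  (3 * (1 - 2 * s) * s * (s + 1) + (-8 + 13 * s + 27 * s ^ 2 - 6 * s ^ 3) * x
      + (-16 - 30 * s + 30 * s ^ 2) * x ^ 2 + (8 - 40 * s) * x ^ 3 + 16 * x ^ 4)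
    / (3 * s * (s + 1) * (s + 2))

lemma convTerm_succ_left_mul (m l : ℕ) :
    convTerm (m + 1) l * ((2 * l + 1) * (m + 2))
      = convTerm m (l + 1) * ((2 * m + 1) * (l + 3)) := by
  simp only [convTerm, cast_centralBinom_succ]
  push_cast
  field_simp
  ring

lemma gosperCert_sub (m l : ℕ) :
    gosperCert (m + 1) l * ((2 * m + 1) * (l + 3)) - gosperCert m (l + 1) * ((2 * l + 1) * (m + 2))
      = (2 * l + 1) * (m + 2) := by
  simp only [gosperCert]
  push_cast
  field_simp
  ring

lemma convTerm_eq_sub (m l : ℕ) :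
    convTerm m (l + 1) = gosperCert (m + 1) l * convTerm (m + 1) l
      - gosperCert m (l + 1) * convTerm m (l + 1) := by
  have hpos : ((2 * l + 1) * (m + 2) : ℚ) ≠ 0 := by positivity
  apply mul_right_cancel₀ hpos
  linear_combination -gosperCert (m + 1) l * convTerm_succ_left_mul m l
    - convTerm m (l + 1) * gosperCert_sub m l

lemma sum_Icc_convTerm (n : ℕ) :
    ∑ m ∈ Icc 1 (n + 1), convTerm m (n + 1 - m)
      = gosperCert (n + 1) 0 * convTerm (n + 1) 0 + convTerm (n + 1) 0
        - gosperCert 1 n * convTerm 1 n := by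
  set g : ℕ → ℚ := fun m ↦ gosperCert m (n + 1 - m) * convTerm m (n + 1 - m)
  have hstep : ∀ m ∈ Ico 1 (n + 1), convTerm m (n + 1 - m) = g (m + 1) - g m := by
    intro m hm
    obtain ⟨l, rfl⟩ : ∃ l, n = m + l := ⟨n - m, by grind⟩
    simp only [g, show m + l + 1 - m = l + 1 by omega, show m + l + 1 - (m + 1) = l by omega]
    exact convTerm_eq_sub m l
  have hn : 1 ≤ n + 1 := by omega
  rw [← Ico_add_one_right_eq_Icc, sum_Ico_succ_top hn, sum_congr rfl hstep, sum_Ico_sub g hn]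
  simp only [g, Nat.sub_self, Nat.add_sub_cancel]
  ring

/-- Σ_{m=1}^{k-1} C(2m,m)C(2k-2m-2,k-m-1)/((m+1)(k-m)(k-m+1))
    = (1/6)[ -((k-1)/((k+2)(2k+1))) C(2k+2,k+1) + (6(k-1)/((k+1)(2k-1))) C(2k,k) ]. -/
theorem stmt_14 (k : ℕ) (hk : 2 ≤ k) :
    ∑ m ∈ Finset.Icc 1 (k - 1),
      (((2 * m).choose m : ℚ) * ((2 * k - 2 * m - 2).choose (k - m - 1) : ℚ))
        / (((m : ℚ) + 1) * ((k : ℚ) - (m : ℚ)) * ((k : ℚ) - (m : ℚ) + 1))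
    = (1 / 6) * (-((((k : ℚ) - 1) / (((k : ℚ) + 2) * (2 * (k : ℚ) + 1)))
          * ((2 * k + 2).choose (k + 1) : ℚ))
        + (6 * ((k : ℚ) - 1) / (((k : ℚ) + 1) * (2 * (k : ℚ) - 1)))
          * ((2 * k).choose k : ℚ)) := by
  obtain ⟨n, rfl⟩ : ∃ n, k = n + 2 := ⟨k - 2, by omega⟩
  have hsummand : ∀ m ∈ Icc 1 (n + 1),
      (((2 * m).choose m : ℚ) * ((2 * (n + 2) - 2 * m - 2).choose (n + 2 - m - 1) : ℚ))
        / (((m : ℚ) + 1) * (((n + 2 : ℕ) : ℚ) - m) * (((n + 2 : ℕ) : ℚ) - m + 1))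
        = convTerm m (n + 1 - m) := by
    intro m hm
    have hmn : m ≤ n + 1 := (mem_Icc.mp hm).2
    rw [convTerm, show 2 * (n + 2) - 2 * m - 2 = 2 * (n + 1 - m) by omega,
      show n + 2 - m - 1 = n + 1 - m by omega, ← centralBinom_eq_two_mul_choose,
      ← centralBinom_eq_two_mul_choose]
    push_cast [hmn]
    ring_nf
  rw [show n + 2 - 1 = n + 1 by omega, sum_congr rfl hsummand, sum_Icc_convTerm,
    show 2 * (n + 2) + 2 = 2 * (n + 3) by ring,
    ← centralBinom_eq_two_mul_choose, ← centralBinom_eq_two_mul_choose]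
  simp only [convTerm, gosperCert, cast_centralBinom_succ, centralBinom_zero]
  push_cast
  -- so that `field_simp` can see this denominator is nonzero
  rw [show 2 * ((n : ℚ) + 2) - 1 = 2 * n + 3 by ring]
  field_simp
  ring
end
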